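/- arXiv:2402.04646 — 4 statements merged into one kernel-verified Lean document; each statement's English description precedes it below -/
import Mathlib

section
/- Let Φ ∈ ℝ^{M×N} with N = gL satisfy the Unique Representation Property. If x and x' in ℝ^N satisfy Φx = Φx' and each of x and x' has fewer than (M+1)/(2L) nonzero blocks (with respect to the partition of {1,…,N} into g consecutive blocks of size L), then x = x'. Consequently, in the noiseless model y = Φ x_true where x_true has K₀ < (M+1)/(2L) nonzero blocks, x_true is the unique solution of y = Φx among all vectors with fewer than (M+1)/(2L) nonzero blocks, so any solution of y = Φx with a minimal number of nonzero blocks equals x_true (the exact-recovery content of Theorem 1). -/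
open Matrix

/-- Number of nonzero blocks of a block-structured vector indexed by `Fin g × Fin L`. -/
noncomputable def nnzBlocks {g L : ℕ} (x : Fin g × Fin L → ℝ) : ℕ :=
  {b : Fin g | ∃ l : Fin L, x (b, l) ≠ 0}.ncard

open scoped Classical in
lemma nnzBlocks_eq_card {g L : ℕ} (x : Fin g × Fin L → ℝ) :
    nnzBlocks x = (Finset.univ.filter (fun b : Fin g => ∃ l : Fin L, x (b, l) ≠ 0)).card := by
  have h : {b : Fin g | ∃ l : Fin L, x (b, l) ≠ 0} =
      ↑(Finset.univ.filter (fun b : Fin g => ∃ l : Fin L, x (b, l) ≠ 0)) := by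
    ext b; simp
  rw [nnzBlocks, h, Set.ncard_coe_finset]

/-- Theorem 1 (exact recovery content): under URP, any two solutions of `Φ x = Φ x'` with
fewer than `(M+1)/(2L)` nonzero blocks coincide; consequently the true signal is the unique
sufficiently block-sparse solution, and any solution with a minimal number of nonzero blocks
equals the true signal. -/
theorem stmt_0 (M g L : ℕ) (hM : 0 < M) (hg : 0 < g) (hL : 0 < L)
    (Φ : Matrix (Fin M) (Fin g × Fin L) ℝ)
    (hURP : ∀ s : Finset (Fin g × Fin L), s.card ≤ M →
      LinearIndependent ℝ (fun j : s => fun i : Fin M => Φ i j))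
    (xtrue : Fin g × Fin L → ℝ)
    (hK0 : (nnzBlocks xtrue : ℝ) < ((M : ℝ) + 1) / (2 * L)) :
    (∀ x x' : Fin g × Fin L → ℝ, Φ.mulVec x = Φ.mulVec x' →
        (nnzBlocks x : ℝ) < ((M : ℝ) + 1) / (2 * L) →
        (nnzBlocks x' : ℝ) < ((M : ℝ) + 1) / (2 * L) → x = x') ∧
    (∀ x : Fin g × Fin L → ℝ, Φ.mulVec x = Φ.mulVec xtrue →
        (nnzBlocks x : ℝ) < ((M : ℝ) + 1) / (2 * L) → x = xtrue) ∧
    (∀ x : Fin g × Fin L → ℝ, Φ.mulVec x = Φ.mulVec xtrue →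
        (∀ z : Fin g × Fin L → ℝ, Φ.mulVec z = Φ.mulVec xtrue → nnzBlocks x ≤ nnzBlocks z) →
        x = xtrue) := by
  classical
  have key : ∀ x x' : Fin g × Fin L → ℝ, Φ.mulVec x = Φ.mulVec x' →
      (nnzBlocks x : ℝ) < ((M : ℝ) + 1) / (2 * L) →
      (nnzBlocks x' : ℝ) < ((M : ℝ) + 1) / (2 * L) → x = x' := by
    intro x x' heq hx hx'
    set d : Fin g × Fin L → ℝ := fun j => x j - x' j with hd
    have hΦd : Φ.mulVec d = 0 := by
      have h1 : Φ.mulVec d = Φ.mulVec x - Φ.mulVec x' := by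
        ext i
        simp [Matrix.mulVec, dotProduct, hd, mul_sub, Finset.sum_sub_distrib]
      rw [h1, heq, sub_self]
    set Bx := Finset.univ.filter (fun b : Fin g => ∃ l : Fin L, x (b, l) ≠ 0) with hBx
    set Bx' := Finset.univ.filter (fun b : Fin g => ∃ l : Fin L, x' (b, l) ≠ 0) with hBx'
    set s : Finset (Fin g × Fin L) := (Bx ∪ Bx') ×ˢ Finset.univ with hs
    have hsupp : ∀ j, d j ≠ 0 → j ∈ s := by
      intro j hj
      have hor : x j ≠ 0 ∨ x' j ≠ 0 := by
        by_contra h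
        push_neg at h
        simp [hd, h.1, h.2] at hj
      rcases j with ⟨b, l⟩
      simp only [hs, Finset.mem_product, Finset.mem_union, Finset.mem_univ, and_true]
      rcases hor with h | h
      · exact Or.inl (by simp only [hBx, Finset.mem_filter, Finset.mem_univ, true_and]; exact ⟨l, h⟩)
      · exact Or.inr (by simp only [hBx', Finset.mem_filter, Finset.mem_univ, true_and]; exact ⟨l, h⟩)
    have hL' : (0:ℝ) < (L:ℝ) := by exact_mod_cast hL
    have h2L : (0:ℝ) < 2 * (L:ℝ) := by linarith
    rw [nnzBlocks_eq_card] at hx hx'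
    have hx1 : (Bx.card : ℝ) * (2 * L) < (M:ℝ) + 1 := (lt_div_iff₀ h2L).mp hx
    have hx1' : (Bx'.card : ℝ) * (2 * L) < (M:ℝ) + 1 := (lt_div_iff₀ h2L).mp hx'
    have hcardR : (((Bx.card + Bx'.card) * L : ℕ) : ℝ) < (M:ℝ) + 1 := by
      push_cast
      nlinarith [hx1, hx1']
    have hcardN : (Bx.card + Bx'.card) * L ≤ M := by
      have : (Bx.card + Bx'.card) * L < M + 1 := by exact_mod_cast hcardR
      omega
    have hsM : s.card ≤ M := by
      have h1 : s.card = (Bx ∪ Bx').card * L := by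
        rw [hs, Finset.card_product, Finset.card_univ, Fintype.card_fin]
      have h2 : (Bx ∪ Bx').card ≤ Bx.card + Bx'.card := Finset.card_union_le _ _
      calc s.card = (Bx ∪ Bx').card * L := h1
        _ ≤ (Bx.card + Bx'.card) * L := Nat.mul_le_mul_right _ h2
        _ ≤ M := hcardN
    have li := hURP s hsM
    have hsum : ∑ j : s, d (j : Fin g × Fin L) • (fun i : Fin M => Φ i j) = 0 := by
      funext i
      have : (∑ j : s, d (j : Fin g × Fin L) • (fun i : Fin M => Φ i j)) i
          = ∑ j ∈ s, Φ i j * d j := by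
        rw [Finset.sum_apply]
        rw [← Finset.sum_attach s (fun j => Φ i j * d j)]
        simp [mul_comm]
      rw [this]
      have : ∑ j ∈ s, Φ i j * d j = ∑ j : Fin g × Fin L, Φ i j * d j := by
        apply Finset.sum_subset (Finset.subset_univ s)
        intro j _ hj
        have : d j = 0 := by
          by_contra h
          exact hj (hsupp j h)
        simp [this]
      rw [this]
      have := congrFun hΦd i
      simpa [Matrix.mulVec, dotProduct] using this
    have hzero : ∀ j : s, d (j : Fin g × Fin L) = 0 :=
      Fintype.linearIndependent_iff.mp li (fun j => d j) hsum
    have hdzero : ∀ j, d j = 0 := by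
      intro j
      by_cases hj : j ∈ s
      · exact hzero ⟨j, hj⟩
      · by_contra h
        exact hj (hsupp j h)
    funext j
    have := hdzero j
    simp only [hd] at this
    linarith
  refine ⟨key, fun x hx hxs => key x xtrue hx hxs hK0, ?_⟩
  intro x hx hmin
  have hle : nnzBlocks x ≤ nnzBlocks xtrue := hmin xtrue rfl
  have hxs : (nnzBlocks x : ℝ) < ((M : ℝ) + 1) / (2 * L) := by
    have : (nnzBlocks x : ℝ) ≤ (nnzBlocks xtrue : ℝ) := by exact_mod_cast hle
    linarith
  exact key x xtrue hx hxs hK0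
end

section
/- Let y ∈ ℝ^M and for u ∈ ℝ^M let P(u) ∈ ℝ^{M×N²} have entries P(u)_{m,(k,l)} = (Φᵀ u)_k · B̃_{kl} · Φ_{ml}, and let b(u) = y − β⁻¹ u. Then for u ∈ ℝ^M: P(u) · (√γ ⊗ √γ) = b(u) if and only if u = Σ_y(γ)⁻¹ y; and in that case yᵀ Σ_y(γ)⁻¹ y = yᵀ u. Consequently (Lemma 2), for any constant C, the level-set condition yᵀ Σ_y(γ)⁻¹ y = C is equivalent to the linear condition P(u) (√γ ⊗ √γ) = y − β⁻¹ u for the vector u = Σ_y(γ)⁻¹ y, which satisfies yᵀ u = C. -/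
/-!
Since `B̃` is symmetric, `P(u) (√γ ⊗ √γ) = Φ Σ₀(γ) Φᵀ u`, so the equation `P(u) (√γ ⊗ √γ) = y − β⁻¹ u`
is just `Σ_y(γ) u = y`. As `Σ_y(γ)` is `β⁻¹ I` plus a positive semidefinite matrix, it is positive
definite, hence invertible, and the equation has the unique solution `u = Σ_y(γ)⁻¹ y`.
-/

open Matrix

namespace Matrix

variable {m n ι α : Type*} [Fintype m] [Fintype n] [Fintype ι]

theorem of_mulVec_kronecker_self [CommSemiring α] [DecidableEq ι]
    (A : Matrix m ι α) (B : Matrix ι ι α) (d : ι → α) (u : m → α) :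
    (of fun i (p : ι × ι) => (Aᵀ *ᵥ u) p.1 * B p.1 p.2 * A i p.2) *ᵥ (fun p => d p.1 * d p.2) =
      (A * (diagonal d * Bᵀ * diagonal d) * Aᵀ) *ᵥ u := by
  rw [← mulVec_mulVec, ← mulVec_mulVec]
  generalize Aᵀ *ᵥ u = w
  ext i
  simp only [mulVec, dotProduct, of_apply, Fintype.sum_prod_type, mul_diagonal, diagonal_mul,
    transpose_apply, Finset.mul_sum]
  rw [Finset.sum_comm]
  refine Finset.sum_congr rfl fun l _ => Finset.sum_congr rfl fun k _ => ?_
  ring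

theorem mulVec_eq_iff_eq_inv_mulVec [DecidableEq n] [CommRing α] {A : Matrix n n α}
    (hA : IsUnit A) {u y : n → α} : A *ᵥ u = y ↔ u = A⁻¹ *ᵥ y := by
  have hdet := (isUnit_iff_isUnit_det A).1 hA
  constructor
  · rintro rfl
    rw [mulVec_mulVec, nonsing_inv_mul A hdet, one_mulVec]
  · rintro rfl
    rw [mulVec_mulVec, mul_nonsing_inv A hdet, one_mulVec]

theorem mulVec_eq_sub_smul_iff [DecidableEq n] [CommRing α] {K : Matrix n n α} {c : α}
    (h : IsUnit (c • 1 + K)) {u y : n → α} :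
    K *ᵥ u = y - c • u ↔ u = (c • 1 + K)⁻¹ *ᵥ y := by
  rw [← mulVec_eq_iff_eq_inv_mulVec h, add_mulVec, smul_mulVec, one_mulVec, eq_sub_iff_add_eq']

end Matrix

theorem stmt_5_general (M g L : ℕ)
    (Φ : Matrix (Fin M) (Fin g × Fin L) ℝ)
    (β : ℝ) (hβ : 0 < β)
    (Btil : Matrix (Fin g × Fin L) (Fin g × Fin L) ℝ) (hB : Btil.PosDef)
    (γ : Fin g × Fin L → ℝ)
    (y : Fin M → ℝ)
    (Sy : Matrix (Fin M) (Fin M) ℝ)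
    (hSy : Sy = β⁻¹ • (1 : Matrix (Fin M) (Fin M) ℝ) +
      Φ * (Matrix.diagonal (fun k => Real.sqrt (γ k)) * Btil *
        Matrix.diagonal (fun k => Real.sqrt (γ k))) * Φᵀ)
    (P : (Fin M → ℝ) → Matrix (Fin M) ((Fin g × Fin L) × (Fin g × Fin L)) ℝ)
    (hP : P = fun u => Matrix.of fun (m : Fin M) (p : (Fin g × Fin L) × (Fin g × Fin L)) =>
      Φᵀ.mulVec u p.1 * Btil p.1 p.2 * Φ m p.2)
    (v : (Fin g × Fin L) × (Fin g × Fin L) → ℝ)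
    (hv : v = fun p => Real.sqrt (γ p.1) * Real.sqrt (γ p.2)) :
    (∀ u : Fin M → ℝ, (P u).mulVec v = y - β⁻¹ • u ↔ u = Sy⁻¹.mulVec y) ∧
    (∀ u : Fin M → ℝ, (P u).mulVec v = y - β⁻¹ • u →
      y ⬝ᵥ Sy⁻¹.mulVec y = y ⬝ᵥ u) ∧
    (∀ C : ℝ, y ⬝ᵥ Sy⁻¹.mulVec y = C ↔
      ∃ u : Fin M → ℝ, y ⬝ᵥ u = C ∧ (P u).mulVec v = y - β⁻¹ • u) := by
  set D : Matrix (Fin g × Fin L) (Fin g × Fin L) ℝ := diagonal fun k => Real.sqrt (γ k)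
  have hBsymm : Btilᵀ = Btil := by
    rw [← conjTranspose_eq_transpose_of_trivial, hB.isHermitian.eq]
  have hPv : ∀ u, P u *ᵥ v = (Φ * (D * Btil * D) * Φᵀ) *ᵥ u := fun u => by
    subst hP hv
    have := of_mulVec_kronecker_self Φ Btil (fun k => Real.sqrt (γ k)) u
    rwa [hBsymm] at this
  have hSyPD : Sy.PosDef := by
    have hD : Dᴴ = D := by simp [D]
    have hDBD : (D * Btil * D).PosSemidef := by
      simpa only [hD] using hB.posSemidef.mul_mul_conjTranspose_same D
    have hΦ : Φᴴ = Φᵀ := conjTranspose_eq_transpose_of_trivial Φ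
    rw [hSy, ← hΦ]
    exact (PosDef.one.smul (inv_pos.2 hβ)).add_posSemidef (hDBD.mul_mul_conjTranspose_same Φ)
  have hsolve : ∀ u, P u *ᵥ v = y - β⁻¹ • u ↔ u = Sy⁻¹ *ᵥ y := fun u => by
    rw [hPv, hSy]
    exact mulVec_eq_sub_smul_iff (hSy ▸ hSyPD.isUnit)
  refine ⟨hsolve, fun u hu => by rw [(hsolve u).1 hu], fun C => ⟨?_, ?_⟩⟩
  · rintro rfl
    exact ⟨_, rfl, (hsolve _).2 rfl⟩
  · rintro ⟨u, rfl, hu⟩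
    rw [(hsolve u).1 hu]

/-- Lemma 2: with `P(u)_{m,(k,l)} = (Φᵀu)_k B̃_{kl} Φ_{ml}` and `b(u) = y − β⁻¹ u`, one has
`P(u)(√γ ⊗ √γ) = b(u)` iff `u = Σ_y(γ)⁻¹ y`; in that case `yᵀ Σ_y(γ)⁻¹ y = yᵀ u`.
Consequently, for any constant `C`, `yᵀ Σ_y(γ)⁻¹ y = C` iff there is `u` with `yᵀu = C`
and `P(u)(√γ ⊗ √γ) = y − β⁻¹ u`. -/
theorem stmt_5 (M g L : ℕ) (hM : 0 < M) (hg : 0 < g) (hL : 0 < L)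
    (Φ : Matrix (Fin M) (Fin g × Fin L) ℝ)
    (β : ℝ) (hβ : 0 < β)
    (Btil : Matrix (Fin g × Fin L) (Fin g × Fin L) ℝ) (hB : Btil.PosDef)
    (hBdiag : ∀ k l : Fin g × Fin L, k.1 ≠ l.1 → Btil k l = 0)
    (γ : Fin g × Fin L → ℝ) (hγ : ∀ k, 0 ≤ γ k)
    (y : Fin M → ℝ)
    (Sy : Matrix (Fin M) (Fin M) ℝ)
    (hSy : Sy = β⁻¹ • (1 : Matrix (Fin M) (Fin M) ℝ) +
      Φ * (Matrix.diagonal (fun k => Real.sqrt (γ k)) * Btil *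
        Matrix.diagonal (fun k => Real.sqrt (γ k))) * Φᵀ)
    (P : (Fin M → ℝ) → Matrix (Fin M) ((Fin g × Fin L) × (Fin g × Fin L)) ℝ)
    (hP : P = fun u => Matrix.of fun (m : Fin M) (p : (Fin g × Fin L) × (Fin g × Fin L)) =>
      Φᵀ.mulVec u p.1 * Btil p.1 p.2 * Φ m p.2)
    (v : (Fin g × Fin L) × (Fin g × Fin L) → ℝ)
    (hv : v = fun p => Real.sqrt (γ p.1) * Real.sqrt (γ p.2)) :
    (∀ u : Fin M → ℝ, (P u).mulVec v = y - β⁻¹ • u ↔ u = Sy⁻¹.mulVec y) ∧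
    (∀ u : Fin M → ℝ, (P u).mulVec v = y - β⁻¹ • u →
      y ⬝ᵥ Sy⁻¹.mulVec y = y ⬝ᵥ u) ∧
    (∀ C : ℝ, y ⬝ᵥ Sy⁻¹.mulVec y = C ↔
      ∃ u : Fin M → ℝ, y ⬝ᵥ u = C ∧ (P u).mulVec v = y - β⁻¹ • u) :=
  stmt_5_general M g L Φ β hβ Btil hB γ y Sy hSy P hP v hv
end

section
/- Let f : (ℝ^{n×n})^g → ℝ and ζ : ℝ^{n×n} → ℝ be differentiable, let B, B₁, …, B_g ∈ ℝ^{n×n} be pairwise distinct matrices, and let λ₁, …, λ_g ∈ ℝ be such that for each i the partial gradient of f in its i-th argument at (B₁,…,B_g) equals λ_i ∇ζ(B_i). Then there exists a polynomial function ψ : ℝ^{n×n} → ℝ such that for every i, ψ(B_i) = ψ(B) and ∇ψ(B_i) = ∇ζ(B_i); consequently (B₁,…,B_g) together with the multipliers (λ₁,…,λ_g) is a KKT pair of the constrained problem min f(B₁,…,B_g) subject to ψ(B_i) = ψ(B) for all i = 1,…,g (Proposition 1). -/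
/-!
Hermite interpolation by polynomials in the continuous linear forms. For each point `a i`,
separating forms give affine functions equal to `1` at `a i` and to `0` at a chosen other point;
the square `w i` of their product is `1` at `a i` and vanishes to second order at every other
point. Then `ψ = ∑ i, w i * (G i - G i (a i))` vanishes at all points and has derivative `G i`
at `a i`. Applied to `B, B₁, …, B_g` with `G i = ∇ζ(B_i)` (and `0` at `B`), the KKT equations
for `ψ` are exactly the stationarity hypothesis.
-/

section

variable (𝕜 E : Type*) [NontriviallyNormedField 𝕜] [NormedAddCommGroup E] [NormedSpace 𝕜 E]

def polyFun : Subalgebra 𝕜 (E → 𝕜) :=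
  Algebra.adjoin 𝕜 (Set.range fun L : StrongDual 𝕜 E => ⇑L)

variable {𝕜 E}

theorem differentiable_of_mem_polyFun {u : E → 𝕜} (hu : u ∈ polyFun 𝕜 E) :
    Differentiable 𝕜 u := by
  induction hu using Algebra.adjoin_induction with
  | mem _ hL => obtain ⟨L, rfl⟩ := hL; exact L.differentiable
  | algebraMap c => exact differentiable_const c
  | add _ _ _ _ hu hv => exact hu.add hv
  | mul _ _ _ _ hu hv => exact hu.mul hv

theorem dual_sub_const_mem_polyFun (L : StrongDual 𝕜 E) (c : 𝕜) :
    (fun x => L x - c) ∈ polyFun 𝕜 E :=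
  sub_mem (Algebra.subset_adjoin ⟨L, rfl⟩) (algebraMap_mem _ c)

theorem hasFDerivAt_sq_of_eq_zero {u : E → 𝕜} {y : E} (hu : DifferentiableAt 𝕜 u y)
    (hy : u y = 0) : HasFDerivAt (fun x => u x ^ 2) (0 : E →L[𝕜] 𝕜) y :=
  (hu.hasFDerivAt.pow 2).congr_fderiv (by ext; simp [hy])

variable [SeparatingDual 𝕜 E]

theorem exists_mem_polyFun_eq_zero_eq_one {x y : E} (h : x ≠ y) :
    ∃ u ∈ polyFun 𝕜 E, u y = 0 ∧ u x = 1 := by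
  obtain ⟨L, hL⟩ := SeparatingDual.exists_eq_one (R := 𝕜) (sub_ne_zero.2 h)
  exact ⟨fun z => L z - L y, dual_sub_const_mem_polyFun L _, sub_self _, by simpa using hL⟩

theorem exists_mem_polyFun_bump {ι : Type*} [Fintype ι] [DecidableEq ι] {a : ι → E}
    (ha : Function.Injective a) (i : ι) :
    ∃ w ∈ polyFun 𝕜 E,
      w (a i) = 1 ∧ ∀ j ≠ i, w (a j) = 0 ∧ HasFDerivAt w (0 : E →L[𝕜] 𝕜) (a j) := by
  have hsep : ∀ j : {j // j ≠ i}, ∃ u ∈ polyFun 𝕜 E, u (a j) = 0 ∧ u (a i) = 1 :=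
    fun j => exists_mem_polyFun_eq_zero_eq_one (ha.ne j.2.symm)
  choose ℓ hℓ hℓj hℓi using hsep
  set u : E → 𝕜 := ∏ j, ℓ j
  have hu : u ∈ polyFun 𝕜 E := prod_mem fun j _ => hℓ j
  have hu_zero : ∀ j (hj : j ≠ i), u (a j) = 0 := fun j hj => by
    simpa [u, Finset.prod_apply] using
      Finset.prod_eq_zero (Finset.mem_univ ⟨j, hj⟩) (hℓj ⟨j, hj⟩)
  refine ⟨u ^ 2, pow_mem hu 2, by simp [u, Finset.prod_apply, hℓi], fun j hj => ⟨?_, ?_⟩⟩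
  · simp [hu_zero j hj]
  · exact hasFDerivAt_sq_of_eq_zero (differentiable_of_mem_polyFun hu _) (hu_zero j hj)

theorem exists_mem_polyFun_eq_zero_hasFDerivAt {ι : Type*} [Fintype ι] {a : ι → E}
    (ha : Function.Injective a) (G : ι → E →L[𝕜] 𝕜) :
    ∃ ψ ∈ polyFun 𝕜 E, ∀ k, ψ (a k) = 0 ∧ HasFDerivAt ψ (G k) (a k) := by
  classical
  choose w hw hw_self hw_other using exists_mem_polyFun_bump (𝕜 := 𝕜) ha
  set term : ι → E → 𝕜 := fun i x => w i x * (G i x - G i (a i))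
  have hterm : ∀ i k, term i (a k) = 0 ∧
      HasFDerivAt (term i) (if i = k then G k else 0) (a k) := by
    intro i k
    have hG : HasFDerivAt (fun x => G i x - G i (a i)) (G i) (a k) :=
      (G i).hasFDerivAt.sub_const _
    by_cases hik : i = k
    · subst hik
      have hw_diff := (differentiable_of_mem_polyFun (hw i) (a i)).hasFDerivAt
      refine ⟨by simp [term], ?_⟩
      exact (hw_diff.fun_mul hG).congr_fderiv (by ext; simp [hw_self i])
    · obtain ⟨hw_zero, hw_deriv⟩ := hw_other i k (Ne.symm hik)
      refine ⟨by simp [term, hw_zero], ?_⟩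
      exact (hw_deriv.fun_mul hG).congr_fderiv (by ext; simp [hik, hw_zero])
  refine ⟨fun x => ∑ i, term i x, ?_, fun k => ⟨?_, ?_⟩⟩
  · have hψ : (fun x => ∑ i, term i x) = ∑ i, w i * fun x => G i x - G i (a i) := by
      ext; simp [term]
    rw [hψ]
    exact sum_mem fun i _ => mul_mem (hw i) (dual_sub_const_mem_polyFun (G i) _)
  · simp [(hterm _ k).1]
  · simpa using HasFDerivAt.fun_sum fun i (_ : i ∈ Finset.univ) => (hterm i k).2

theorem sum_smul_single_single {ι κ : Type*} [Fintype ι] [Fintype κ] [DecidableEq ι]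
    [DecidableEq κ] (X : ι → κ → 𝕜) :
    ∑ q : ι × κ, X q.1 q.2 • Pi.single q.1 (Pi.single q.2 (1 : 𝕜)) = X := by
  ext i k
  simp [Finset.sum_apply, Pi.single_apply, Fintype.sum_prod_type, ite_apply]

theorem exists_mvPolynomial_of_mem_polyFun {ι κ : Type*} [Fintype ι] [Fintype κ]
    {u : (ι → κ → 𝕜) → 𝕜} (hu : u ∈ polyFun 𝕜 (ι → κ → 𝕜)) :
    ∃ p : MvPolynomial (ι × κ) 𝕜, ∀ X, u X = MvPolynomial.eval (fun q => X q.1 q.2) p := by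
  classical
  let φ := MvPolynomial.aeval (R := 𝕜) fun (q : ι × κ) (X : ι → κ → 𝕜) => X q.1 q.2
  have hφ : ∀ p X, φ p X = MvPolynomial.eval (fun q => X q.1 q.2) p := fun p X => by
    induction p using MvPolynomial.induction_on <;> simp_all [φ]
  have hle : polyFun 𝕜 (ι → κ → 𝕜) ≤ φ.range := by
    refine Algebra.adjoin_le ?_
    rintro _ ⟨L, rfl⟩
    refine ⟨∑ q, MvPolynomial.C (L (Pi.single q.1 (Pi.single q.2 1))) * MvPolynomial.X q, ?_⟩
    ext X
    conv_rhs => rw [← sum_smul_single_single X]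
    simp [hφ, mul_comm]
  obtain ⟨p, rfl⟩ := hle hu
  exact ⟨p, hφ p⟩

end

theorem stmt_6_general (n gg : ℕ)
    (f : (Fin gg → (Fin n → Fin n → ℝ)) → ℝ)
    (ζ : (Fin n → Fin n → ℝ) → ℝ)
    (B : Fin n → Fin n → ℝ) (Bv : Fin gg → (Fin n → Fin n → ℝ))
    (hdist : (∀ i j : Fin gg, i ≠ j → Bv i ≠ Bv j) ∧ ∀ i : Fin gg, Bv i ≠ B)
    (lam : Fin gg → ℝ)
    (hstat : ∀ i : Fin gg,
      fderiv ℝ (fun X => f (Function.update Bv i X)) (Bv i) = lam i • fderiv ℝ ζ (Bv i)) :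
    ∃ ψ : (Fin n → Fin n → ℝ) → ℝ,
      (∃ p : MvPolynomial (Fin n × Fin n) ℝ,
        ∀ X : Fin n → Fin n → ℝ, ψ X = MvPolynomial.eval (fun q => X q.1 q.2) p) ∧
      (∀ i : Fin gg, ψ (Bv i) = ψ B) ∧
      (∀ i : Fin gg, fderiv ℝ ψ (Bv i) = fderiv ℝ ζ (Bv i)) ∧
      (∀ i : Fin gg,
        fderiv ℝ (fun X => f (Function.update Bv i X)) (Bv i)
          - lam i • fderiv ℝ ψ (Bv i) = 0) := by
  have hinj : Function.Injective (Fin.cons B Bv : Fin (gg + 1) → Fin n → Fin n → ℝ) :=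
    Fin.cons_injective_iff.2
      ⟨fun ⟨i, hi⟩ => hdist.2 i hi, fun i j hij => by_contra fun hne => hdist.1 i j hne hij⟩
  obtain ⟨ψ, hψ, hψ_at⟩ :=
    exists_mem_polyFun_eq_zero_hasFDerivAt hinj (Fin.cons 0 fun i => fderiv ℝ ζ (Bv i))
  have hderiv : ∀ i, fderiv ℝ ψ (Bv i) = fderiv ℝ ζ (Bv i) := fun i => by
    simpa using (hψ_at i.succ).2.fderiv
  refine ⟨ψ, exists_mvPolynomial_of_mem_polyFun hψ, fun i => ?_, hderiv, fun i => ?_⟩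
  · simpa using (hψ_at i.succ).1.trans (hψ_at 0).1.symm
  · rw [hstat i, hderiv i, sub_self]

/-- Proposition 1: if at `(B₁,…,B_g)` the partial gradient of `f` in its `i`-th argument equals
`λ_i ∇ζ(B_i)` for each `i`, then there is a polynomial function `ψ : ℝ^{n×n} → ℝ` with
`ψ(B_i) = ψ(B)` and `∇ψ(B_i) = ∇ζ(B_i)` for all `i`, so that `(B₁,…,B_g)` together with
`(λ₁,…,λ_g)` is a KKT pair of `min f` subject to `ψ(B_i) = ψ(B)` for all `i`. -/
theorem stmt_6 (n gg : ℕ)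
    (f : (Fin gg → (Fin n → Fin n → ℝ)) → ℝ) (hf : Differentiable ℝ f)
    (ζ : (Fin n → Fin n → ℝ) → ℝ) (hζ : Differentiable ℝ ζ)
    (B : Fin n → Fin n → ℝ) (Bv : Fin gg → (Fin n → Fin n → ℝ))
    (hdist : (∀ i j : Fin gg, i ≠ j → Bv i ≠ Bv j) ∧ ∀ i : Fin gg, Bv i ≠ B)
    (lam : Fin gg → ℝ)
    (hstat : ∀ i : Fin gg,
      fderiv ℝ (fun X => f (Function.update Bv i X)) (Bv i) = lam i • fderiv ℝ ζ (Bv i)) :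
    ∃ ψ : (Fin n → Fin n → ℝ) → ℝ,
      (∃ p : MvPolynomial (Fin n × Fin n) ℝ,
        ∀ X : Fin n → Fin n → ℝ, ψ X = MvPolynomial.eval (fun q => X q.1 q.2) p) ∧
      (∀ i : Fin gg, ψ (Bv i) = ψ B) ∧
      (∀ i : Fin gg, fderiv ℝ ψ (Bv i) = fderiv ℝ ζ (Bv i)) ∧
      (∀ i : Fin gg,
        fderiv ℝ (fun X => f (Function.update Bv i X)) (Bv i)
          - lam i • fderiv ℝ ψ (Bv i) = 0) :=
  stmt_6_general n gg f ζ B Bv hdist lam hstat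
end

section
/- Let B ∈ ℝ^{L×L} be symmetric positive definite, let M ∈ ℝ^{L×L} be symmetric, let g₁, …, g_L > 0, fix an index j ∈ {1,…,L}, and for s > 0 let G(s) = diag(g₁,…,g_{j−1}, s, g_{j+1},…,g_L). Then the function F(s) = −(1/2) log det(G(s) B G(s)) − (1/2) tr((G(s) B G(s))⁻¹ M) is differentiable on (0, ∞) with derivative F′(s) = −1/s + A/s³ + T/s², where A = (B⁻¹)_{jj} · M_{jj} and T = ∑_{l ≠ j} (B⁻¹)_{jl} · g_l⁻¹ · M_{lj} (the E-step gradient computation ∂Q/∂√γ_{ij} used to derive the variance updates). -/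
/-!
On `(0, ∞)` everything is explicit. Since `G(s)` is diagonal, `det (G B G) = det B · P² · s²`
with `P = ∏_{l ≠ j} g_l`, and `(G B G)⁻¹ = G⁻¹ B⁻¹ G⁻¹` with `G⁻¹ = diag (g⁻¹ with s⁻¹ at j)`.
Hence `tr ((G B G)⁻¹ M)` is a quadratic polynomial in `s⁻¹`; by symmetry of `B⁻¹` and `M` the two
cross terms coincide, so its coefficients are `A`, `2 T` and a constant. Thus near `s`,
`F(x) = K - log x - ½ (A x⁻² + 2 T x⁻¹ + c)`, and differentiating gives the formula.
-/

open Matrix Finset Function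

namespace Finset

variable {ι R : Type*} [Fintype ι] [DecidableEq ι] [AddCommMonoid R]

theorem sum_sum_eq_add_sum_erase_add_sum_sum_erase (f : ι → ι → R) (j : ι) :
    ∑ k, ∑ l, f k l = f j j + ∑ l ∈ univ.erase j, (f j l + f l j)
      + ∑ k ∈ univ.erase j, ∑ l ∈ univ.erase j, f k l := by
  simp only [← add_sum_erase _ _ (mem_univ j), sum_add_distrib]
  abel

end Finset

namespace Matrix

variable {n R : Type*} [Fintype n] [DecidableEq n]

theorem det_diagonal_update_mul_mul [CommRing R] (g : n → R) (j : n) (x : R) (B : Matrix n n R) :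
    (diagonal (update g j x) * B * diagonal (update g j x)).det
      = B.det * (∏ l ∈ univ.erase j, g l) ^ 2 * x ^ 2 := by
  rw [det_mul, det_mul, det_diagonal, prod_update_of_mem (mem_univ j), ← erase_eq]
  ring

theorem inv_diagonal_of_ne_zero [Field R] {v : n → R} (hv : ∀ i, v i ≠ 0) :
    (diagonal v)⁻¹ = diagonal v⁻¹ :=
  inv_eq_right_inv (by simp [diagonal_mul_diagonal, hv])

theorem trace_diagonal_mul_mul_diagonal_mul [CommRing R] (d : n → R) (C M : Matrix n n R) :
    (diagonal d * C * diagonal d * M).trace = ∑ k, ∑ l, d k * C k l * d l * M l k := by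
  simp only [trace, diag_apply, mul_apply (N := M), mul_diagonal, diagonal_mul]

theorem sum_sum_update_mul_mul_mul_eq_quadratic [CommRing R] {C M : Matrix n n R}
    (hC : C.IsSymm) (hM : M.IsSymm) (h : n → R) (j : n) (t : R) :
    ∑ k, ∑ l, update h j t k * C k l * update h j t l * M l k
      = C j j * M j j * t ^ 2 + 2 * (∑ l ∈ univ.erase j, C j l * h l * M l j) * t
        + ∑ k ∈ univ.erase j, ∑ l ∈ univ.erase j, h k * C k l * h l * M l k := by
  rw [sum_sum_eq_add_sum_erase_add_sum_sum_erase _ j, update_self]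
  have hupd : ∀ l ∈ univ.erase j, update h j t l = h l := fun l hl =>
    update_of_ne (ne_of_mem_erase hl) _ _
  congr 1
  · rw [mul_sum, sum_mul]
    congr 1
    · ring
    refine sum_congr rfl fun l hl => ?_
    rw [hupd l hl, hC.apply j l, hM.apply l j]
    ring
  · exact sum_congr rfl fun k hk => sum_congr rfl fun l hl => by rw [hupd k hk, hupd l hl]

end Matrix

theorem hasDerivAt_sub_log_sub_quadratic_inv (K a b c : ℝ) {s : ℝ} (hs : s ≠ 0) :
    HasDerivAt (fun x => K - Real.log x - (1 / 2) * (a * x⁻¹ ^ 2 + 2 * b * x⁻¹ + c))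
      (-1 / s + a / s ^ 3 + b / s ^ 2) s := by
  have hinv := hasDerivAt_inv hs
  have := ((hasDerivAt_const s K).sub (Real.hasDerivAt_log hs)).sub
    (((((hinv.pow 2).const_mul a).add (hinv.const_mul (2 * b))).add_const c).const_mul (1 / 2))
  refine this.congr_deriv ?_
  norm_num
  field_simp
  ring

/-- The E-step gradient computation `∂Q/∂√γ_{ij}`: with `G(s)` the diagonal matrix whose
`j`-th diagonal entry is `s` and the others are `g_l > 0`, the function
`F(s) = −(1/2) log det(G(s) B G(s)) − (1/2) tr((G(s) B G(s))⁻¹ M)` is differentiable on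
`(0,∞)` with derivative `F'(s) = −1/s + A/s³ + T/s²`, where `A = (B⁻¹)_{jj} M_{jj}` and
`T = ∑_{l ≠ j} (B⁻¹)_{jl} g_l⁻¹ M_{lj}`. -/
theorem stmt_14 (L : ℕ) (B : Matrix (Fin L) (Fin L) ℝ) (hB : B.PosDef)
    (Mm : Matrix (Fin L) (Fin L) ℝ) (hMm : Mm.IsSymm)
    (g : Fin L → ℝ) (hg : ∀ l, 0 < g l) (j : Fin L) :
    let G : ℝ → Matrix (Fin L) (Fin L) ℝ :=
      fun s => Matrix.diagonal (Function.update g j s)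
    let F : ℝ → ℝ := fun s =>
      -(1 / 2) * Real.log ((G s * B * G s).det)
        - (1 / 2) * ((G s * B * G s)⁻¹ * Mm).trace
    let A : ℝ := B⁻¹ j j * Mm j j
    let T : ℝ := ∑ l ∈ Finset.univ.erase j, B⁻¹ j l * (g l)⁻¹ * Mm l j
    ∀ s : ℝ, 0 < s → HasDerivAt F (-1 / s + A / s ^ 3 + T / s ^ 2) s := by
  intro G F A T s hs
  have hP : B.det * (∏ l ∈ univ.erase j, g l) ^ 2 ≠ 0 :=
    mul_ne_zero hB.det_pos.ne' (pow_ne_zero _ (prod_ne_zero_iff.2 fun l _ => (hg l).ne'))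
  have hBinv : B⁻¹.IsSymm := (isHermitian_iff_isSymm.1 hB.isHermitian).inv
  have hGinv : ∀ x, 0 < x → (G x)⁻¹ = diagonal (update g⁻¹ j x⁻¹) := fun x hx => by
    rw [update_inv]
    exact inv_diagonal_of_ne_zero ((forall_update_iff _ fun _ y => y ≠ 0).2
      ⟨hx.ne', fun l _ => (hg l).ne'⟩)
  have hF : ∀ x, 0 < x → F x = -(1 / 2) * Real.log (B.det * (∏ l ∈ univ.erase j, g l) ^ 2)
      - Real.log x - (1 / 2) * (A * x⁻¹ ^ 2 + 2 * T * x⁻¹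
        + ∑ k ∈ univ.erase j, ∑ l ∈ univ.erase j, g⁻¹ k * B⁻¹ k l * g⁻¹ l * Mm l k) := by
    intro x hx
    simp only [F, G]
    rw [det_diagonal_update_mul_mul, Real.log_mul hP (pow_ne_zero _ hx.ne'), Real.log_pow,
      Matrix.mul_inv_rev, Matrix.mul_inv_rev, ← Matrix.mul_assoc, hGinv x hx,
      trace_diagonal_mul_mul_diagonal_mul, sum_sum_update_mul_mul_mul_eq_quadratic hBinv hMm]
    simp only [A, T, Pi.inv_apply]
    push_cast
    ring
  exact (hasDerivAt_sub_log_sub_quadratic_inv _ A T _ hs.ne').congr_of_eventuallyEq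
    (Filter.eventually_of_mem (Ioi_mem_nhds hs) hF)
end
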